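/- Let p_1,…,p_{2n} : [0,T) → ℝ² be a solution of the planar point-vortex gradient flow with V₀(0) ≠ 0. Then T ≤ ln(2n/|V₀(0)|); in particular, the solution cannot keep the points pairwise distinct for all time, so a collision must occur in finite time. -/

import Mathlib

open Finset

noncomputable section

abbrev E2 := EuclideanSpace ℝ (Fin 2)
abbrev E3 := EuclideanSpace ℝ (Fin 3)

/-- Velocity field of the planar point-vortex gradient flow. -/
def pvVel {N : ℕ} (d : Fin N → ℤ) (q : Fin N → E2) (i : Fin N) : E2 :=
  ((1 + ‖q i‖ ^ 2) ^ 2 / 2) •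
    ((1 + ‖q i‖ ^ 2)⁻¹ • q i +
      (d i : ℝ) • ∑ j ∈ univ.erase i, (d j : ℝ) • (‖q i - q j‖ ^ 2)⁻¹ • (q i - q j))

/-- Inverse stereographic projection: the sphere point corresponding to `p ∈ ℝ²`. -/
def sph (p : E2) : E3 :=
  (WithLp.equiv 2 (Fin 3 → ℝ)).symm
    ![2 * p 0 / (1 + ‖p‖ ^ 2), 2 * p 1 / (1 + ‖p‖ ^ 2), (‖p‖ ^ 2 - 1) / (1 + ‖p‖ ^ 2)]

/-!
Along the flow the sum `V = ∑ Pᵢ` of the sphere points solves the linear equation `V' = V`.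
Differentiating the inverse stereographic projection along the velocity field, `Pᵢ'` is `Pᵢ`
plus a term linear in the interaction `Sᵢ = ∑_{j ≠ i} d_j (pᵢ - p_j) / |pᵢ - p_j|²`; pairing
the contributions of `(i, j)` and `(j, i)` and using `∑ d_j = 0`, `dᵢ² = 1`, these extra terms
cancel in the sum. Hence `|V(t)| = eᵗ |V(0)|`, while `|V(t)| ≤ 2n` as a sum of `2n` unit
vectors, so `eᵗ |V(0)| ≤ 2n` for every `t < T`.
-/

open scoped RealInnerProductSpace

section PairSums

variable {ι M : Type*} [Fintype ι] [DecidableEq ι]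

theorem sum_sum_erase_comm [AddCommMonoid M] (F : ι → ι → M) :
    ∑ i, ∑ j ∈ univ.erase i, F j i = ∑ i, ∑ j ∈ univ.erase i, F i j := by
  rw [sum_comm' (t' := univ) (s' := fun j => univ.erase j)]
  intro i j
  simp [and_comm, ne_comm]

theorem two_nsmul_sum_sum_erase [AddCommMonoid M] (F : ι → ι → M) :
    2 • ∑ i, ∑ j ∈ univ.erase i, F i j = ∑ i, ∑ j ∈ univ.erase i, (F i j + F j i) := by
  simp only [sum_add_distrib, sum_sum_erase_comm F, two_nsmul]

theorem sum_sum_erase_mul_smul [AddCommGroup M] [Module ℝ M] {d : ι → ℝ}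
    (hd : ∑ i, d i = 0) (x : ι → M) :
    ∑ i, ∑ j ∈ univ.erase i, (d i * d j) • x i = -∑ i, d i ^ 2 • x i := by
  have hrest (i : ι) : ∑ j ∈ univ.erase i, d j = -d i := by
    rw [sum_erase_eq_sub (mem_univ i), hd, zero_sub]
  simp only [← sum_smul, ← mul_sum, hrest, ← sum_neg_distrib, mul_neg, neg_smul, sq]

end PairSums

section VortexInteraction

variable {ι E : Type*} [Fintype ι] [DecidableEq ι] [NormedAddCommGroup E] [InnerProductSpace ℝ E]

def vortexInteraction (d : ι → ℝ) (q : ι → E) (i : ι) : E :=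
  ∑ j ∈ univ.erase i, d j • (‖q i - q j‖ ^ 2)⁻¹ • (q i - q j)

theorem inv_norm_sq_mul_inner_add_swap {a b : E} (h : a ≠ b) :
    (‖a - b‖ ^ 2)⁻¹ * ⟪a, a - b⟫ + (‖b - a‖ ^ 2)⁻¹ * ⟪b, b - a⟫ = 1 := by
  have hab : ‖a - b‖ ^ 2 ≠ 0 := by simpa [sub_eq_zero] using h
  rw [norm_sub_rev b a, ← mul_add, ← neg_sub a b, inner_neg_right, ← sub_eq_add_neg,
    ← inner_sub_left, real_inner_self_eq_norm_sq, inv_mul_cancel₀ hab]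

theorem inv_norm_sq_smul_tangential_add_swap {a b : E} (h : a ≠ b) :
    (‖a - b‖ ^ 2)⁻¹ • ((1 + ‖a‖ ^ 2) • (a - b) - (2 * ⟪a, a - b⟫) • a)
      + (‖b - a‖ ^ 2)⁻¹ • ((1 + ‖b‖ ^ 2) • (b - a) - (2 * ⟪b, b - a⟫) • b)
      = -(a + b) := by
  have hab : ‖a - b‖ ^ 2 ≠ 0 := by simpa [sub_eq_zero] using h
  have hba : ‖b - a‖ ^ 2 = ‖a - b‖ ^ 2 := by rw [norm_sub_rev]
  have hsq : ‖a - b‖ ^ 2 = ‖a‖ ^ 2 - 2 * ⟪a, b⟫ + ‖b‖ ^ 2 := norm_sub_sq_real a b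
  have ha : ⟪a, a - b⟫ = ‖a‖ ^ 2 - ⟪a, b⟫ := by
    rw [inner_sub_right, real_inner_self_eq_norm_sq]
  have hb : ⟪b, b - a⟫ = ‖b‖ ^ 2 - ⟪a, b⟫ := by
    rw [inner_sub_right, real_inner_self_eq_norm_sq, real_inner_comm]
  calc _ = (‖a - b‖ ^ 2)⁻¹ • (‖a - b‖ ^ 2 • -(a + b)) := by
        rw [hba, ha, hb, ← smul_add, hsq]; congr 1; module
    _ = -(a + b) := by rw [smul_smul, inv_mul_cancel₀ hab, one_smul]

theorem sum_mul_inner_vortexInteraction {d : ι → ℝ} (hd : ∑ i, d i = 0) {q : ι → E}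
    (hq : Function.Injective q) :
    ∑ i, d i * ⟪q i, vortexInteraction d q i⟫ = -(∑ i, d i ^ 2) / 2 := by
  set F : ι → ι → ℝ := fun i j => (d i * d j) * ((‖q i - q j‖ ^ 2)⁻¹ * ⟪q i, q i - q j⟫)
  have hF : ∑ i, d i * ⟪q i, vortexInteraction d q i⟫ = ∑ i, ∑ j ∈ univ.erase i, F i j := by
    simp only [vortexInteraction, inner_sum, inner_smul_right, mul_sum, F]
    exact sum_congr rfl fun i _ => sum_congr rfl fun j _ => by ring
  have hsym : ∑ i, ∑ j ∈ univ.erase i, (F i j + F j i) = -∑ i, d i ^ 2 := by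
    calc _ = ∑ i, ∑ j ∈ univ.erase i, (d i * d j) • (1 : ℝ) := by
          refine sum_congr rfl fun i _ => sum_congr rfl fun j hj => ?_
          rw [← inv_norm_sq_mul_inner_add_swap (hq.ne (ne_of_mem_erase hj).symm)]
          simp only [F, smul_eq_mul]; ring
      _ = -∑ i, d i ^ 2 := by simpa using sum_sum_erase_mul_smul hd (fun _ => (1 : ℝ))
  have := two_nsmul_sum_sum_erase F
  rw [hsym, two_nsmul] at this
  linarith

theorem sum_smul_tangential_vortexInteraction {d : ι → ℝ} (hd : ∑ i, d i = 0) {q : ι → E}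
    (hq : Function.Injective q) :
    ∑ i, d i • ((1 + ‖q i‖ ^ 2) • vortexInteraction d q i
      - (2 * ⟪q i, vortexInteraction d q i⟫) • q i) = ∑ i, d i ^ 2 • q i := by
  set F : ι → ι → E := fun i j => (d i * d j) • (‖q i - q j‖ ^ 2)⁻¹ •
    ((1 + ‖q i‖ ^ 2) • (q i - q j) - (2 * ⟪q i, q i - q j⟫) • q i)
  have hF : ∑ i, d i • ((1 + ‖q i‖ ^ 2) • vortexInteraction d q i
      - (2 * ⟪q i, vortexInteraction d q i⟫) • q i) = ∑ i, ∑ j ∈ univ.erase i, F i j := by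
    simp only [vortexInteraction, inner_sum, mul_sum, sum_smul, smul_sum, ← sum_sub_distrib]
    refine sum_congr rfl fun i _ => sum_congr rfl fun j _ => ?_
    simp only [F, inner_smul_right]
    module
  have hsym : ∑ i, ∑ j ∈ univ.erase i, (F i j + F j i) = (2 : ℝ) • ∑ i, d i ^ 2 • q i := by
    calc _ = -(∑ i, ∑ j ∈ univ.erase i, (d i * d j) • q i
            + ∑ i, ∑ j ∈ univ.erase i, (d j * d i) • q j) := by
          rw [← sum_add_distrib, ← sum_neg_distrib]
          refine sum_congr rfl fun i _ => ?_
          rw [← sum_add_distrib, ← sum_neg_distrib]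
          refine sum_congr rfl fun j hj => ?_
          have := inv_norm_sq_smul_tangential_add_swap (hq.ne (ne_of_mem_erase hj).symm)
          simp only [F, mul_comm (d j) (d i), ← smul_add, this]
          module
      _ = (2 : ℝ) • ∑ i, d i ^ 2 • q i := by
          rw [sum_sum_erase_comm (fun i j => (d i * d j) • q i), sum_sum_erase_mul_smul hd]
          module
  have := two_nsmul_sum_sum_erase F
  rw [hsym, ← hF, two_nsmul, ← two_smul ℝ] at this
  exact smul_right_injective E two_ne_zero this

end VortexInteraction

section InverseStereographic

variable {E : Type*} [NormedAddCommGroup E] [InnerProductSpace ℝ E]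

def invStereo (p : E) : E × ℝ :=
  ((2 / (1 + ‖p‖ ^ 2)) • p, (‖p‖ ^ 2 - 1) / (1 + ‖p‖ ^ 2))

def invStereoDeriv (p v : E) : E × ℝ :=
  ((2 / (1 + ‖p‖ ^ 2)) • v - (4 * ⟪p, v⟫ / (1 + ‖p‖ ^ 2) ^ 2) • p,
    4 * ⟪p, v⟫ / (1 + ‖p‖ ^ 2) ^ 2)

theorem HasDerivWithinAt.invStereo {f : ℝ → E} {v : E} {s : Set ℝ} {x : ℝ}
    (hf : HasDerivWithinAt f v s x) :
    HasDerivWithinAt (fun t => invStereo (f t)) (invStereoDeriv (f x) v) s x := by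
  have hρ : HasDerivWithinAt (fun t => 1 + ‖f t‖ ^ 2) (2 * ⟪f x, v⟫) s x :=
    hf.norm_sq.const_add 1
  have hρ0 : 1 + ‖f x‖ ^ 2 ≠ 0 := by positivity
  refine ((((hasDerivWithinAt_const x s 2).div hρ hρ0).smul hf).prodMk
    ((hf.norm_sq.sub_const 1).div hρ hρ0)).congr_deriv ?_
  ext
  · simp only [invStereoDeriv, Pi.div_apply]
    match_scalars <;> field_simp
    ring
  · simp only [invStereoDeriv]
    field_simp
    ring

theorem invStereoDeriv_vortexVelocity (p S : E) (ε : ℝ) :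
    invStereoDeriv p (((1 + ‖p‖ ^ 2) ^ 2 / 2) • ((1 + ‖p‖ ^ 2)⁻¹ • p + ε • S))
      = invStereo p + (ε • ((1 + ‖p‖ ^ 2) • S - (2 * ⟪p, S⟫) • p) - p, 1 + 2 * (ε * ⟪p, S⟫)) := by
  simp only [invStereoDeriv, invStereo, inner_smul_right, inner_add_right,
    real_inner_self_eq_norm_sq, Prod.mk_add_mk]
  congr 1
  · match_scalars <;> field_simp
    ring
  · field_simp
    ring

end InverseStereographic

theorem sum_invStereoDeriv_pvVel {N : ℕ} {d : Fin N → ℤ} (hd : ∀ i, d i = 1 ∨ d i = -1)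
    (hdsum : ∑ i, d i = 0) {q : Fin N → E2} (hq : Function.Injective q) :
    ∑ i, invStereoDeriv (q i) (pvVel d q i) = ∑ i, invStereo (q i) := by
  set d' : Fin N → ℝ := fun i => d i
  have hsq (i : Fin N) : d' i ^ 2 = 1 := by rcases hd i with h | h <;> simp [d', h]
  have hsum : ∑ i, d' i = 0 := by simp only [d']; exact_mod_cast hdsum
  have hv (i : Fin N) : pvVel d q i = ((1 + ‖q i‖ ^ 2) ^ 2 / 2) •
      ((1 + ‖q i‖ ^ 2)⁻¹ • q i + d' i • vortexInteraction d' q i) := rfl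
  simp only [hv, invStereoDeriv_vortexVelocity, sum_add_distrib, add_eq_left]
  ext
  · rw [Prod.fst_sum, Prod.fst_zero, sum_sub_distrib,
      sum_smul_tangential_vortexInteraction hsum hq]
    simp [hsq]
  · rw [Prod.snd_sum, Prod.snd_zero, sum_add_distrib, ← mul_sum,
      sum_mul_inner_vortexInteraction hsum hq]
    simp only [hsq, sum_const, card_univ, Fintype.card_fin, nsmul_eq_mul, mul_one]
    ring

def prodToE3 : E2 × ℝ →L[ℝ] E3 :=
  LinearMap.toContinuousLinearMap
    { toFun := fun x => WithLp.toLp 2 ![x.1 0, x.1 1, x.2]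
      map_add' := fun x y => by ext k; fin_cases k <;> simp
      map_smul' := fun c x => by ext k; fin_cases k <;> simp }

theorem sph_eq_prodToE3_invStereo (p : E2) : sph p = prodToE3 (invStereo p) := by
  ext k
  fin_cases k <;> simp [sph, prodToE3, invStereo] <;> ring

theorem norm_sph (p : E2) : ‖sph p‖ = 1 := by
  have hp : ‖p‖ ^ 2 = p 0 ^ 2 + p 1 ^ 2 := by
    simp [EuclideanSpace.norm_sq_eq, Fin.sum_univ_two]
  rw [EuclideanSpace.norm_eq, Real.sqrt_eq_one]
  simp only [sph, WithLp.equiv_symm_apply, Real.norm_eq_abs, sq_abs, Fin.sum_univ_three,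
    Matrix.cons_val_zero, Matrix.cons_val_one, Matrix.cons_val]
  field_simp
  rw [hp]
  ring

theorem HasDerivWithinAt.sum_sph_of_pvVel {N : ℕ} {d : Fin N → ℤ}
    (hd : ∀ i, d i = 1 ∨ d i = -1) (hdsum : ∑ i, d i = 0) {p : Fin N → ℝ → E2}
    {s : Set ℝ} {t : ℝ} (hinj : Function.Injective fun i => p i t)
    (hp : ∀ i, HasDerivWithinAt (p i) (pvVel d (fun j => p j t) i) s t) :
    HasDerivWithinAt (fun t => ∑ i, sph (p i t)) (∑ i, sph (p i t)) s t := by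
  simp only [sph_eq_prodToE3_invStereo]
  have h := HasDerivWithinAt.fun_sum (u := univ) fun i _ =>
    prodToE3.hasFDerivAt.comp_hasDerivWithinAt t (hp i).invStereo
  rwa [← map_sum, sum_invStereoDeriv_pvVel hd hdsum hinj, map_sum] at h

section ExponentialGrowth

variable {F : Type*} [NormedAddCommGroup F] [NormedSpace ℝ F]

theorem Convex.eq_exp_smul_of_hasDerivWithinAt_self {s : Set ℝ} (hs : Convex ℝ s) {V : ℝ → F}
    (hV : ∀ t ∈ s, HasDerivWithinAt V (V t) s t) {a b : ℝ} (ha : a ∈ s) (hb : b ∈ s) :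
    V b = Real.exp (b - a) • V a := by
  have hW : ∀ t ∈ s, HasDerivWithinAt (fun t => Real.exp (-t) • V t) 0 s t := by
    intro t ht
    have hexp : HasDerivWithinAt (fun t => Real.exp (-t)) (-Real.exp (-t)) s t := by
      simpa using (hasDerivAt_neg' t).exp.hasDerivWithinAt
    simpa using hexp.fun_smul (hV t ht)
  have hconst := hs.norm_image_sub_le_of_norm_hasDerivWithin_le hW (fun _ _ => norm_zero.le)
    ha hb
  rw [zero_mul, norm_le_zero_iff, sub_eq_zero] at hconst
  rw [Real.exp_sub, div_eq_mul_inv, ← Real.exp_neg, mul_smul, ← hconst, smul_smul,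
    ← Real.exp_add, add_neg_cancel, Real.exp_zero, one_smul]

theorem le_log_div_norm_of_hasDerivWithinAt_self {V : ℝ → F} {T M : ℝ}
    (hV : ∀ t ∈ Set.Ico 0 T, HasDerivWithinAt V (V t) (Set.Ico 0 T) t) (hM : ∀ t, ‖V t‖ ≤ M)
    (h0 : V 0 ≠ 0) : T ≤ Real.log (M / ‖V 0‖) := by
  have hV0 : 0 < ‖V 0‖ := norm_pos_iff.2 h0
  refine le_of_forall_lt_imp_le_of_dense fun t ht => ?_
  rcases lt_or_ge t 0 with htneg | htnonneg
  · exact htneg.le.trans (Real.log_nonneg ((one_le_div hV0).2 (hM 0)))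
  · have hmem : t ∈ Set.Ico 0 T := ⟨htnonneg, ht⟩
    have hgrowth := (convex_Ico 0 T).eq_exp_smul_of_hasDerivWithinAt_self hV
      (Set.left_mem_Ico.2 (htnonneg.trans_lt ht)) hmem
    rw [Real.le_log_iff_exp_le (div_pos (hV0.trans_le (hM 0)) hV0), le_div_iff₀ hV0]
    simpa [hgrowth, norm_smul] using hM t

end ExponentialGrowth

theorem collision_in_finite_time_general
    (n : ℕ) (T : ℝ)
    (p : Fin (2 * n) → ℝ → E2) (d : Fin (2 * n) → ℤ)
    (hd : ∀ i, d i = 1 ∨ d i = -1) (hdsum : ∑ i, d i = 0)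
    (hdist : ∀ t ∈ Set.Ico (0 : ℝ) T, ∀ i j, i ≠ j → p i t ≠ p j t)
    (hode : ∀ t ∈ Set.Ico (0 : ℝ) T, ∀ i,
      HasDerivWithinAt (p i) (pvVel d (fun j => p j t) i) (Set.Ico (0 : ℝ) T) t)
    (hV0 : (∑ i, sph (p i 0)) ≠ 0) :
    T ≤ Real.log ((2 * n : ℝ) / ‖∑ i, sph (p i 0)‖) := by
  have hflow (t : ℝ) (ht : t ∈ Set.Ico 0 T) :
      HasDerivWithinAt (fun t => ∑ i, sph (p i t)) (∑ i, sph (p i t)) (Set.Ico 0 T) t :=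
    HasDerivWithinAt.sum_sph_of_pvVel hd hdsum
      (fun i j h => by_contra fun hij => hdist t ht i j hij h) (hode t ht)
  have hbound (t : ℝ) : ‖∑ i, sph (p i t)‖ ≤ 2 * n := by
    simpa [norm_sph] using norm_sum_le univ fun i => sph (p i t)
  exact le_log_div_norm_of_hasDerivWithinAt_self hflow hbound hV0

/-- If `V₀(0) ≠ 0`, a solution of the planar point-vortex gradient flow keeping the
points pairwise distinct can exist only up to time `ln(2n/‖V₀(0)‖)`: a collision must
occur in finite time. -/
theorem collision_in_finite_time
    (n : ℕ) (hn : 1 ≤ n) (T : ℝ)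
    (p : Fin (2 * n) → ℝ → E2) (d : Fin (2 * n) → ℤ)
    (hd : ∀ i, d i = 1 ∨ d i = -1) (hdsum : ∑ i, d i = 0)
    (hdist : ∀ t ∈ Set.Ico (0 : ℝ) T, ∀ i j, i ≠ j → p i t ≠ p j t)
    (hode : ∀ t ∈ Set.Ico (0 : ℝ) T, ∀ i,
      HasDerivWithinAt (p i) (pvVel d (fun j => p j t) i) (Set.Ico (0 : ℝ) T) t)
    (hV0 : (∑ i, sph (p i 0)) ≠ 0) :
    T ≤ Real.log ((2 * n : ℝ) / ‖∑ i, sph (p i 0)‖) :=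
  collision_in_finite_time_general n T p d hd hdsum hdist hode hV0
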